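/- There exists a constant A' > 0 such that for every positive integer n and every ρ ∈ (0,1) there exist measurable sets A, B ⊂ ℝⁿ with 0 < λ(A) < ∞, 0 < λ(B) < ∞ and ρ ≤ (λ(B)/λ(A))^{1/n} ≤ ρ⁻¹, and a measurable set Θ ⊂ A × B with λ(Θ) > (1 − A'·ρ·n^{1/2})·λ(A)·λ(B), for which λ(A +_Θ B)^{2/n} < λ(A)^{2/n} + λ(B)^{2/n}. -/

import Mathlib

/-!
Take `A` the unit ball, `B` the ball of radius `ρ`, and let `Θ` keep the pairs with
`‖x + y‖² ≤ 1 + ρ² - ρ/√n`. Then `A +_Θ B` lies in a ball of radius `< √(1 + ρ²)`, which gives the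
volume inequality. A discarded pair has `2⟪x, y⟫ > 1 - ρ/√n - ‖x‖²`, because
`‖x + y‖² = ‖x‖² + 2⟪x, y⟫ + ‖y‖²` and `‖y‖ ≤ ρ`. Cut `A` into shells of width `2ρ/√n` in the
variable `1 - ‖x‖²`: the `j`-th shell has measure at most `(2j + 3) ρ √n λ(A)`, and for `x` in it
the partners `y` lie in the cap `⟪x, y⟫ > jρ/√n` of `B`. That cap sits in a ball of radius
`ρ e^{-j²/2n}`, so it has at most `e^{-j²/2} ≤ (2/3)^j` of the measure of `B`. Since
`∑ (2j + 3) (2/3)^j = 21`, the discarded pairs have measure at most `21 ρ √n λ(A) λ(B)`.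
-/

open MeasureTheory

/-- The restricted (to `Θ`) Minkowski sum `A +_Θ B = { x + y : (x, y) ∈ Θ }`. -/
def restrictedSum {n : ℕ} (Θ : Set (EuclideanSpace ℝ (Fin n) × EuclideanSpace ℝ (Fin n))) :
    Set (EuclideanSpace ℝ (Fin n)) :=
  (fun p => p.1 + p.2) '' Θ

open Metric Module
open scoped RealInnerProductSpace

theorem hasSum_two_mul_add_three_mul_two_thirds_pow :
    HasSum (fun j : ℕ => (2 * j + 3) * (2 / 3 : ℝ) ^ j) 21 := by
  have hq : ‖(2 / 3 : ℝ)‖ < 1 := by norm_num [abs_of_pos]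
  have h := ((hasSum_coe_mul_geometric_of_norm_lt_one hq).mul_left 2).add
    ((hasSum_geometric_of_lt_one (r := 2 / 3) (by norm_num) (by norm_num)).mul_left 3)
  rw [show 2 * (2 / 3 / (1 - 2 / 3) ^ 2) + 3 * (1 - 2 / 3 : ℝ)⁻¹ = 21 by norm_num] at h
  exact h.congr_fun fun j => by ring

theorem exp_neg_sq_div_two_le_two_thirds_pow (j : ℕ) :
    Real.exp (-(j : ℝ) ^ 2 / 2) ≤ (2 / 3) ^ j := by
  have h : Real.exp (-(1 / 2)) ≤ 2 / 3 := by
    rw [Real.exp_neg, inv_le_comm₀ (Real.exp_pos _) (by norm_num)]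
    linarith [Real.add_one_le_exp (1 / 2)]
  calc Real.exp (-(j : ℝ) ^ 2 / 2) ≤ Real.exp (j * -(1 / 2)) := by
        gcongr
        have hj : (j : ℝ) ≤ j ^ 2 := by exact_mod_cast Nat.le_self_pow two_ne_zero j
        linarith
    _ = Real.exp (-(1 / 2)) ^ j := Real.exp_nat_mul _ j
    _ ≤ (2 / 3) ^ j := pow_le_pow_left₀ (Real.exp_nonneg _) h j

theorem setLIntegral_comp_eq_tsum {α : Type*} [MeasurableSpace α] (μ : Measure α) {f : α → ℕ}
    (hf : Measurable f) (s : Set α) (c : ℕ → ENNReal) :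
    ∫⁻ x in s, c (f x) ∂μ = ∑' j, c j * μ (f ⁻¹' {j} ∩ s) := by
  rw [← lintegral_map measurable_from_nat hf, lintegral_countable']
  congr! 2 with j
  rw [Measure.map_apply hf (measurableSet_singleton j),
    Measure.restrict_apply (hf (measurableSet_singleton j))]

section NormedSpace

variable {E : Type*} [NormedAddCommGroup E] [NormedSpace ℝ E] [FiniteDimensional ℝ E]
  [MeasurableSpace E] (μ : Measure E) [μ.IsAddHaarMeasure]

theorem prod_setOf_sq_norm_add_le_pos {ρ K : ℝ} (hρ0 : 0 < ρ) (hρ1 : ρ ≤ 1) (hK : ρ ^ 2 ≤ K) :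
    0 < μ.prod μ {p : E × E | ‖p.1‖ ≤ 1 ∧ ‖p.2‖ ≤ ρ ∧ ‖p.1 + p.2‖ ^ 2 ≤ K} := by
  have hsub : ball 0 (ρ / 2) ×ˢ ball 0 (ρ / 2) ⊆
      {p : E × E | ‖p.1‖ ≤ 1 ∧ ‖p.2‖ ≤ ρ ∧ ‖p.1 + p.2‖ ^ 2 ≤ K} := by
    rintro ⟨x, y⟩ ⟨hx, hy⟩
    rw [mem_ball_zero_iff] at hx hy
    have hxy : ‖x + y‖ ≤ ρ := (norm_add_le x y).trans (by linarith)
    refine ⟨by linarith, by linarith, ?_⟩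
    nlinarith [norm_nonneg (x + y)]
  refine lt_of_lt_of_le ?_ (measure_mono hsub)
  rw [Measure.prod_prod]
  exact ENNReal.mul_pos (measure_ball_pos μ _ (by positivity)).ne'
    (measure_ball_pos μ _ (by positivity)).ne'

variable [BorelSpace E]

theorem addHaar_closedBall_rpow_div_finrank (hn : 0 < finrank ℝ E) (x : E) {r p : ℝ}
    (hr : 0 ≤ r) (hp : 0 ≤ p) :
    μ (closedBall x r) ^ (p / finrank ℝ E) =
      ENNReal.ofReal (r ^ p) * μ (ball 0 1) ^ (p / finrank ℝ E) := by
  have hn' : (finrank ℝ E : ℝ) ≠ 0 := by positivity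
  rw [μ.addHaar_closedBall x hr, ENNReal.mul_rpow_of_nonneg _ _ (by positivity),
    ENNReal.ofReal_rpow_of_nonneg (by positivity) (by positivity), ← Real.rpow_natCast,
    ← Real.rpow_mul hr, mul_div_cancel₀ _ hn']

theorem addHaar_closedBall_div_rpow_inv_finrank (hn : 0 < finrank ℝ E) (x y : E) {r : ℝ}
    (hr : 0 ≤ r) :
    (μ (closedBall x r) / μ (closedBall y 1)) ^ (1 / finrank ℝ E : ℝ) = ENNReal.ofReal r := by
  have hω : μ (ball (0 : E) 1) ^ (1 / finrank ℝ E : ℝ) ≠ 0 :=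
    (ENNReal.rpow_pos (measure_ball_pos μ 0 one_pos) measure_ball_lt_top.ne).ne'
  have hω' : μ (ball (0 : E) 1) ^ (1 / finrank ℝ E : ℝ) ≠ ⊤ :=
    ENNReal.rpow_ne_top_of_nonneg (by positivity) measure_ball_lt_top.ne
  rw [ENNReal.div_rpow_of_nonneg _ _ (by positivity),
    addHaar_closedBall_rpow_div_finrank μ hn x hr zero_le_one,
    addHaar_closedBall_rpow_div_finrank μ hn y zero_le_one zero_le_one, Real.rpow_one,
    Real.rpow_one, ENNReal.ofReal_one, one_mul, ENNReal.mul_div_cancel_right hω hω']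

theorem addHaar_setOf_one_sub_lt_sq_norm_le (hn : 0 < finrank ℝ E) {a : ℝ} (ha : 0 ≤ a) :
    μ {x : E | ‖x‖ ≤ 1 ∧ 1 - a < ‖x‖ ^ 2} ≤ ENNReal.ofReal (finrank ℝ E * a) * μ (ball 0 1) := by
  set n := finrank ℝ E
  rcases le_or_gt 1 a with h1 | h1
  · have hna : 1 ≤ (n : ℝ) * a := one_le_mul_of_one_le_of_one_le (Nat.one_le_cast.2 hn) h1
    calc μ {x : E | ‖x‖ ≤ 1 ∧ 1 - a < ‖x‖ ^ 2} ≤ μ (closedBall 0 1) :=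
          measure_mono fun x hx => mem_closedBall_zero_iff.2 hx.1
      _ = 1 * μ (ball 0 1) := by rw [μ.addHaar_closedBall 0 zero_le_one]; simp
      _ ≤ _ := by gcongr; exact ENNReal.one_le_ofReal.2 hna
  · set z := √(1 - a)
    have hz : 0 ≤ z := Real.sqrt_nonneg _
    have hz2 : z ^ 2 = 1 - a := Real.sq_sqrt (by linarith)
    have hz1 : z ≤ 1 := by nlinarith
    have hsub : {x : E | ‖x‖ ≤ 1 ∧ 1 - a < ‖x‖ ^ 2} ⊆ closedBall 0 1 \ closedBall 0 z :=
      fun x hx => ⟨mem_closedBall_zero_iff.2 hx.1, fun hxz => by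
        nlinarith [mem_closedBall_zero_iff.1 hxz, norm_nonneg x, hx.2]⟩
    -- Bernoulli: `1 - z ^ n ≤ n * (1 - z) ≤ n * (1 - z ^ 2)`
    have hbern : 1 ≤ n * a + z ^ n := by
      have := one_add_mul_le_pow (show (-2 : ℝ) ≤ z - 1 by linarith) n
      rw [add_sub_cancel] at this
      nlinarith [mul_nonneg (Nat.cast_nonneg n : (0 : ℝ) ≤ n) (mul_nonneg (sub_nonneg.2 hz1) hz)]
    calc _ ≤ μ (closedBall 0 1 \ closedBall 0 z) := measure_mono hsub
      _ = μ (closedBall 0 1) - μ (closedBall 0 z) :=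
          measure_sdiff (closedBall_subset_closedBall hz1)
            measurableSet_closedBall.nullMeasurableSet measure_closedBall_lt_top.ne
      _ ≤ _ := by
          rw [μ.addHaar_closedBall 0 zero_le_one, μ.addHaar_closedBall 0 hz, one_pow,
            ENNReal.ofReal_one, one_mul, tsub_le_iff_right, ← add_mul,
            ← ENNReal.ofReal_add (by positivity) (by positivity)]
          exact le_mul_of_one_le_left' (ENNReal.one_le_ofReal.2 hbern)

theorem addHaar_rpow_two_div_lt_of_subset_closedBall (hn : 0 < finrank ℝ E) {S : Set E}
    {r ρ : ℝ} (hS : S ⊆ closedBall 0 r) (hr : 0 ≤ r) (hρ : 0 ≤ ρ) (hrρ : r ^ 2 < 1 + ρ ^ 2) :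
    μ S ^ (2 / finrank ℝ E : ℝ) < μ (closedBall 0 1) ^ (2 / finrank ℝ E : ℝ) +
      μ (closedBall 0 ρ) ^ (2 / finrank ℝ E : ℝ) := by
  have hω : μ (ball (0 : E) 1) ^ (2 / finrank ℝ E : ℝ) ≠ 0 :=
    (ENNReal.rpow_pos (measure_ball_pos μ 0 one_pos) measure_ball_lt_top.ne).ne'
  have hω' : μ (ball (0 : E) 1) ^ (2 / finrank ℝ E : ℝ) ≠ ⊤ :=
    ENNReal.rpow_ne_top_of_nonneg (by positivity) measure_ball_lt_top.ne
  calc μ S ^ (2 / finrank ℝ E : ℝ) ≤ μ (closedBall 0 r) ^ (2 / finrank ℝ E : ℝ) :=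
        ENNReal.rpow_le_rpow (measure_mono hS) (by positivity)
    _ < _ := by
        rw [addHaar_closedBall_rpow_div_finrank μ hn 0 hr zero_le_two,
          addHaar_closedBall_rpow_div_finrank μ hn 0 zero_le_one zero_le_two,
          addHaar_closedBall_rpow_div_finrank μ hn 0 hρ zero_le_two, Real.one_rpow, ← add_mul,
          ← ENNReal.ofReal_add zero_le_one (by positivity)]
        refine ENNReal.mul_lt_mul_left hω hω'
          (ENNReal.ofReal_lt_ofReal_iff (by positivity) |>.2 ?_)
        simpa only [Real.rpow_two, one_pow] using hrρ

end NormedSpace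

noncomputable def shellIndex {E : Type*} [Norm E] (h : ℝ) (x : E) : ℕ :=
  ⌊(1 - h - ‖x‖ ^ 2) / (2 * h)⌋₊

theorem measurable_shellIndex {E : Type*} [NormedAddCommGroup E] [MeasurableSpace E]
    [OpensMeasurableSpace E] (h : ℝ) : Measurable (shellIndex (E := E) h) :=
  Measurable.nat_floor (by fun_prop)

section InnerProductSpace

variable {E : Type*} [NormedAddCommGroup E] [InnerProductSpace ℝ E]

theorem setOf_le_inner_subset_closedBall {e : E} (he : ‖e‖ = 1) {ρ t : ℝ} (ht : 0 ≤ t) :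
    {y : E | ‖y‖ ≤ ρ ∧ ρ * t ≤ ⟪e, y⟫} ⊆
      closedBall ((ρ * t) • e) (ρ * Real.exp (-t ^ 2 / 2)) := by
  rintro y ⟨hyρ, hy⟩
  have hρ : 0 ≤ ρ := (norm_nonneg y).trans hyρ
  have hsq : ‖y - (ρ * t) • e‖ ^ 2 ≤ ρ ^ 2 * (1 - t ^ 2) := by
    rw [norm_sub_sq_real, real_inner_smul_right, real_inner_comm, norm_smul, he,
      Real.norm_of_nonneg (by positivity)]
    nlinarith [mul_nonneg hρ ht, norm_nonneg y]
  have hexp : ρ ^ 2 * (1 - t ^ 2) ≤ (ρ * Real.exp (-t ^ 2 / 2)) ^ 2 := by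
    rw [mul_pow, ← Real.exp_nat_mul, Nat.cast_ofNat, mul_div_cancel₀ _ two_ne_zero]
    gcongr
    linarith [Real.add_one_le_exp (-t ^ 2)]
  rw [mem_closedBall_iff_norm]
  exact pow_le_pow_iff_left₀ (norm_nonneg _) (by positivity) two_ne_zero |>.1 (hsq.trans hexp)

variable [FiniteDimensional ℝ E] [MeasurableSpace E] [BorelSpace E] (μ : Measure E)
  [μ.IsAddHaarMeasure]

theorem addHaar_setOf_lt_inner_le {x : E} (hx : ‖x‖ ≤ 1) {ρ t : ℝ} (hρ : 0 ≤ ρ) (ht : 0 ≤ t) :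
    μ {y | ‖y‖ ≤ ρ ∧ ρ * t < ⟪x, y⟫} ≤
      ENNReal.ofReal ((ρ * Real.exp (-t ^ 2 / 2)) ^ finrank ℝ E) * μ (ball 0 1) := by
  rcases eq_or_ne x 0 with rfl | hx0
  · simp [(mul_nonneg hρ ht).not_gt]
  have hxpos : 0 < ‖x‖ := norm_pos_iff.2 hx0
  have hsub : {y | ‖y‖ ≤ ρ ∧ ρ * t < ⟪x, y⟫} ⊆ {y | ‖y‖ ≤ ρ ∧ ρ * t ≤ ⟪‖x‖⁻¹ • x, y⟫} := by
    rintro y ⟨hyρ, hy⟩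
    refine ⟨hyρ, ?_⟩
    rw [real_inner_smul_left, inv_mul_eq_div, le_div_iff₀ hxpos]
    nlinarith [mul_nonneg hρ ht]
  calc _ ≤ μ (closedBall ((ρ * t) • (‖x‖⁻¹ • x)) (ρ * Real.exp (-t ^ 2 / 2))) :=
        measure_mono (hsub.trans (setOf_le_inner_subset_closedBall (norm_smul_inv_norm hx0) ht))
    _ = _ := μ.addHaar_closedBall _ (by positivity)

theorem addHaar_setOf_sq_norm_add_gt_le (hn : 0 < finrank ℝ E) {ρ : ℝ} (hρ : 0 < ρ) {x : E}
    (hx : ‖x‖ ≤ 1) :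
    μ {y | ‖y‖ ≤ ρ ∧ 1 + ρ ^ 2 - ρ / √(finrank ℝ E) < ‖x + y‖ ^ 2} ≤
      ENNReal.ofReal (ρ ^ finrank ℝ E * (2 / 3) ^ shellIndex (ρ / √(finrank ℝ E)) x) *
        μ (ball 0 1) := by
  set n := finrank ℝ E
  set h := ρ / √n
  set j := shellIndex h x
  have hs : 0 < √(n : ℝ) := Real.sqrt_pos.2 (by exact_mod_cast hn)
  rcases Nat.eq_zero_or_pos j with hj | hj
  · calc _ ≤ μ (closedBall 0 ρ) := measure_mono fun y hy => mem_closedBall_zero_iff.2 hy.1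
      _ = _ := by rw [μ.addHaar_closedBall 0 hρ.le, hj, pow_zero, mul_one]
  have hjx : 2 * h * j ≤ 1 - h - ‖x‖ ^ 2 := by
    rw [← le_div_iff₀' (by positivity)]
    exact Nat.floor_le (zero_le_one.trans (Nat.floor_pos.1 hj))
  have hsub : {y | ‖y‖ ≤ ρ ∧ 1 + ρ ^ 2 - h < ‖x + y‖ ^ 2} ⊆
      {y | ‖y‖ ≤ ρ ∧ ρ * (j / √n) < ⟪x, y⟫} := by
    rintro y ⟨hyρ, hy⟩
    refine ⟨hyρ, ?_⟩
    rw [norm_add_sq_real] at hy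
    have hρj : ρ * (j / √n) = h * j := by ring
    nlinarith [norm_nonneg y]
  have hexp : (ρ * Real.exp (-(j / √n) ^ 2 / 2)) ^ n = ρ ^ n * Real.exp (-(j : ℝ) ^ 2 / 2) := by
    rw [mul_pow, ← Real.exp_nat_mul, div_pow, Real.sq_sqrt (Nat.cast_nonneg n)]
    congr 2
    field_simp
  calc _ ≤ μ {y | ‖y‖ ≤ ρ ∧ ρ * (j / √n) < ⟪x, y⟫} := measure_mono hsub
    _ ≤ _ := addHaar_setOf_lt_inner_le μ hx hρ.le (by positivity)
    _ ≤ _ := by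
        rw [hexp]
        gcongr
        exact exp_neg_sq_div_two_le_two_thirds_pow j

theorem addHaar_preimage_shellIndex_inter_closedBall_le (hn : 0 < finrank ℝ E) {h : ℝ}
    (hh : 0 < h) (j : ℕ) :
    μ (shellIndex h ⁻¹' {j} ∩ closedBall 0 1) ≤
      ENNReal.ofReal (finrank ℝ E * (h * (2 * j + 3))) * μ (ball 0 1) := by
  refine (measure_mono ?_).trans (addHaar_setOf_one_sub_lt_sq_norm_le μ hn (by positivity))
  rintro x ⟨hxj, hx⟩
  refine ⟨mem_closedBall_zero_iff.1 hx, ?_⟩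
  have := Nat.lt_floor_add_one ((1 - h - ‖x‖ ^ 2) / (2 * h))
  rw [show ⌊(1 - h - ‖x‖ ^ 2) / (2 * h)⌋₊ = j from hxj, div_lt_iff₀ (by positivity)] at this
  linarith

theorem prod_setOf_sq_norm_add_gt_le (hn : 0 < finrank ℝ E) {ρ : ℝ} (hρ : 0 < ρ) :
    μ.prod μ {p : E × E | ‖p.1‖ ≤ 1 ∧ ‖p.2‖ ≤ ρ ∧
        1 + ρ ^ 2 - ρ / √(finrank ℝ E) < ‖p.1 + p.2‖ ^ 2} ≤
      ENNReal.ofReal (21 * ρ * √(finrank ℝ E)) * (μ (closedBall 0 1) * μ (closedBall 0 ρ)) := by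
  set n := finrank ℝ E
  set h := ρ / √n
  set ω := μ (ball (0 : E) 1)
  have hs : 0 < √(n : ℝ) := Real.sqrt_pos.2 (by exact_mod_cast hn)
  have hnh : n * h = ρ * √n := by
    rw [mul_div_left_comm, Real.div_sqrt, mul_comm]
  calc μ.prod μ {p : E × E | ‖p.1‖ ≤ 1 ∧ ‖p.2‖ ≤ ρ ∧ 1 + ρ ^ 2 - h < ‖p.1 + p.2‖ ^ 2}
      = ∫⁻ x, μ {y | ‖x‖ ≤ 1 ∧ ‖y‖ ≤ ρ ∧ 1 + ρ ^ 2 - h < ‖x + y‖ ^ 2} ∂μ :=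
        Measure.prod_apply (by measurability)
    _ ≤ ∫⁻ x in closedBall 0 1, ENNReal.ofReal (ρ ^ n * (2 / 3) ^ shellIndex h x) * ω ∂μ := by
        rw [← lintegral_indicator measurableSet_closedBall]
        refine lintegral_mono fun x => ?_
        by_cases hx : x ∈ closedBall 0 1
        · rw [Set.indicator_of_mem hx]
          exact (measure_mono fun y hy => hy.2).trans
            (addHaar_setOf_sq_norm_add_gt_le μ hn hρ (mem_closedBall_zero_iff.1 hx))
        · simp [mem_closedBall_zero_iff.not.1 hx]
    _ = ∑' j : ℕ, ENNReal.ofReal (ρ ^ n * (2 / 3) ^ j) * ω *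
          μ (shellIndex h ⁻¹' {j} ∩ closedBall 0 1) :=
        setLIntegral_comp_eq_tsum μ (measurable_shellIndex h) _
          (fun j => ENNReal.ofReal (ρ ^ n * (2 / 3) ^ j) * ω)
    _ ≤ ∑' j : ℕ, ENNReal.ofReal (ρ ^ n * (2 / 3) ^ j) * ω *
          (ENNReal.ofReal (n * (h * (2 * j + 3))) * ω) := by
        gcongr with j
        exact addHaar_preimage_shellIndex_inter_closedBall_le μ hn (by positivity) j
    _ = ∑' j : ℕ, ENNReal.ofReal (n * h * ρ ^ n * ((2 * j + 3) * (2 / 3) ^ j)) * (ω * ω) := by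
        refine tsum_congr fun j => ?_
        rw [show n * h * ρ ^ n * ((2 * j + 3) * (2 / 3) ^ j) =
          ρ ^ n * (2 / 3) ^ j * (n * (h * (2 * j + 3))) by ring,
          ENNReal.ofReal_mul (p := ρ ^ n * (2 / 3) ^ j) (by positivity)]
        ring
    _ = ENNReal.ofReal (n * h * ρ ^ n * 21) * (ω * ω) := by
        rw [ENNReal.tsum_mul_right, ← ENNReal.ofReal_tsum_of_nonneg (fun j => by positivity)
          (hasSum_two_mul_add_three_mul_two_thirds_pow.mul_left _).summable,
          (hasSum_two_mul_add_three_mul_two_thirds_pow.mul_left _).tsum_eq]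
    _ = _ := by
        rw [μ.addHaar_closedBall 0 zero_le_one, μ.addHaar_closedBall 0 hρ.le, one_pow,
          ENNReal.ofReal_one, one_mul, hnh, show ρ * √n * ρ ^ n * 21 = 21 * ρ * √n * ρ ^ n by ring,
          ENNReal.ofReal_mul (by positivity)]
        ring

theorem ofReal_mul_lt_prod_setOf_sq_norm_add_le (hn : 0 < finrank ℝ E) {ρ : ℝ} (hρ0 : 0 < ρ)
    (hρ1 : ρ < 1) :
    ENNReal.ofReal (1 - 22 * ρ * √(finrank ℝ E)) * (μ (closedBall 0 1) * μ (closedBall 0 ρ)) <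
      μ.prod μ {p : E × E | ‖p.1‖ ≤ 1 ∧ ‖p.2‖ ≤ ρ ∧
        ‖p.1 + p.2‖ ^ 2 ≤ 1 + ρ ^ 2 - ρ / √(finrank ℝ E)} := by
  set n := finrank ℝ E
  set M := μ (closedBall (0 : E) 1) * μ (closedBall 0 ρ)
  set Θ := {p : E × E | ‖p.1‖ ≤ 1 ∧ ‖p.2‖ ≤ ρ ∧ ‖p.1 + p.2‖ ^ 2 ≤ 1 + ρ ^ 2 - ρ / √n}
  rcases le_or_gt (1 - 22 * ρ * √n) 0 with hc | hc
  · rw [ENNReal.ofReal_eq_zero.2 hc, zero_mul]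
    have hh : ρ / √n ≤ ρ := div_le_self hρ0.le (Real.one_le_sqrt.2 (Nat.one_le_cast.2 hn))
    exact prod_setOf_sq_norm_add_le_pos μ hρ0 hρ1.le (by linarith)
  have hM0 : M ≠ 0 := mul_ne_zero (measure_closedBall_pos μ _ one_pos).ne'
    (measure_closedBall_pos μ _ hρ0).ne'
  have hMt : M ≠ ⊤ := ENNReal.mul_ne_top measure_closedBall_lt_top.ne measure_closedBall_lt_top.ne
  have hcover : M ≤ μ.prod μ Θ + μ.prod μ
      {p : E × E | ‖p.1‖ ≤ 1 ∧ ‖p.2‖ ≤ ρ ∧ 1 + ρ ^ 2 - ρ / √n < ‖p.1 + p.2‖ ^ 2} := by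
    rw [show M = μ.prod μ (closedBall 0 1 ×ˢ closedBall 0 ρ) from (Measure.prod_prod _ _).symm]
    refine (measure_mono fun p hp => ?_).trans (measure_union_le _ _)
    rw [Set.mem_prod, mem_closedBall_zero_iff, mem_closedBall_zero_iff] at hp
    exact (le_or_gt _ _).imp (fun h => ⟨hp.1, hp.2, h⟩) fun h => ⟨hp.1, hp.2, h⟩
  have hsplit : ENNReal.ofReal (1 - 22 * ρ * √n) * M + ENNReal.ofReal (21 * ρ * √n) * M < M := by
    rw [← add_mul, ← ENNReal.ofReal_add hc.le (by positivity)]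
    refine (ENNReal.mul_lt_mul_left hM0 hMt (ENNReal.ofReal_lt_one.2 ?_)).trans_eq (one_mul M)
    nlinarith [mul_pos hρ0 (Real.sqrt_pos.2 (Nat.cast_pos.2 hn) : 0 < √(n : ℝ))]
  exact (ENNReal.add_lt_add_iff_right (ENNReal.mul_ne_top ENNReal.ofReal_ne_top hMt)).1
    (hsplit.trans_le (hcover.trans (add_le_add_right (prod_setOf_sq_norm_add_gt_le μ hn hρ0) _)))

end InnerProductSpace

/-- Optimality (Remark 1.4, second part): for some `A' > 0`, for every `n` and
`ρ ∈ (0,1)` there are sets `A`, `B` with volume ratio controlled by `ρ` and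
`Θ ⊂ A × B` with `λ(Θ) > (1 - A'·ρ·√n)·λ(A)·λ(B)` for which
`λ(A +_Θ B)^{2/n} < λ(A)^{2/n} + λ(B)^{2/n}`. -/
theorem restricted_minkowski_optimality_ratio :
    ∃ A' : ℝ, 0 < A' ∧
      ∀ (n : ℕ), 0 < n →
      ∀ (ρ : ℝ), ρ ∈ Set.Ioo (0 : ℝ) 1 →
        ∃ (A B : Set (EuclideanSpace ℝ (Fin n)))
          (Θ : Set (EuclideanSpace ℝ (Fin n) × EuclideanSpace ℝ (Fin n))),
          MeasurableSet A ∧ MeasurableSet B ∧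
          0 < volume A ∧ volume A < ⊤ ∧ 0 < volume B ∧ volume B < ⊤ ∧
          ENNReal.ofReal ρ ≤ (volume B / volume A) ^ ((1 : ℝ) / n) ∧
          (volume B / volume A) ^ ((1 : ℝ) / n) ≤ ENNReal.ofReal ρ⁻¹ ∧
          MeasurableSet Θ ∧ Θ ⊆ A ×ˢ B ∧
          ENNReal.ofReal (1 - A' * ρ * Real.sqrt n) * (volume A * volume B) < volume Θ ∧
          volume (restrictedSum Θ) ^ ((2 : ℝ) / n)
            < volume A ^ ((2 : ℝ) / n) + volume B ^ ((2 : ℝ) / n) := by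
  refine ⟨22, by norm_num, fun n hn ρ ⟨hρ0, hρ1⟩ => ?_⟩
  have hdim : finrank ℝ (EuclideanSpace ℝ (Fin n)) = n := finrank_euclideanSpace_fin
  have hn' : 0 < finrank ℝ (EuclideanSpace ℝ (Fin n)) := by rwa [hdim]
  have hratio := addHaar_closedBall_div_rpow_inv_finrank volume hn' 0 0 hρ0.le
  rw [hdim] at hratio
  have hh0 : 0 < ρ / √n := div_pos hρ0 (Real.sqrt_pos.2 (Nat.cast_pos.2 hn))
  have hh : ρ / √n ≤ ρ := div_le_self hρ0.le (Real.one_le_sqrt.2 (Nat.one_le_cast.2 hn))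
  set Θ : Set (EuclideanSpace ℝ (Fin n) × EuclideanSpace ℝ (Fin n)) :=
    {p | ‖p.1‖ ≤ 1 ∧ ‖p.2‖ ≤ ρ ∧ ‖p.1 + p.2‖ ^ 2 ≤ 1 + ρ ^ 2 - ρ / √n}
  have hsum : restrictedSum Θ ⊆ closedBall 0 √(1 + ρ ^ 2 - ρ / √n) := by
    rintro _ ⟨p, hp, rfl⟩
    exact mem_closedBall_zero_iff.2 (Real.le_sqrt_of_sq_le hp.2.2)
  refine ⟨closedBall 0 1, closedBall 0 ρ, Θ, measurableSet_closedBall, measurableSet_closedBall,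
    measure_closedBall_pos _ _ one_pos, measure_closedBall_lt_top,
    measure_closedBall_pos _ _ hρ0, measure_closedBall_lt_top,
    hratio.ge, hratio.trans_le (ENNReal.ofReal_le_ofReal ?_), by measurability,
    fun p hp => ⟨mem_closedBall_zero_iff.2 hp.1, mem_closedBall_zero_iff.2 hp.2.1⟩, ?_, ?_⟩
  · exact hρ1.le.trans ((one_le_inv₀ hρ0).2 hρ1.le)
  · rw [Measure.volume_eq_prod]
    simpa only [hdim] using ofReal_mul_lt_prod_setOf_sq_norm_add_le volume hn' hρ0 hρ1
  · have hK : √(1 + ρ ^ 2 - ρ / √n) ^ 2 < 1 + ρ ^ 2 := by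
      rw [Real.sq_sqrt (by nlinarith)]
      linarith
    simpa only [hdim] using
      addHaar_rpow_two_div_lt_of_subset_closedBall volume hn' hsum (Real.sqrt_nonneg _) hρ0.le hK
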